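/- arXiv:1211.0586 — 3 statements merged into one kernel-verified Lean document; each statement's English description precedes it below -/
import Mathlib

section
/- Let T be a locally finite simplicial complex of dimension n with vertex set V, and let f be a simplicial map from |T| to Euclidean space E^N that is affine on each simplex. If the images f(V) of the vertices are in (2n+1)-general position (i.e., no l+1 of the image points lie on an (l-1)-dimensional affine subspace for any 1 ≤ l ≤ 2n+1), then f is injective. -/
/-!
Write a point of a face as a convex combination of its vertices. On a face, `f` is affine, so it
sends such a combination to the combination of the images with the same weights. For two faces
`s` and `t`, extend both weight vectors by zero to `s ∪ t`: if `f x = f y`, the two weight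
vectors give the same affine combination of the images of the at most `2n + 2` vertices of
`s ∪ t`, which are affinely independent, so the weights agree and `x = y`.
-/

open Geometry Set

section Ring

variable {k V ι : Type*} [Ring k] [AddCommGroup V] [Module k V]

theorem Finset.sum_indicator_smul_of_subset {s u : Finset ι} (h : s ⊆ u) (w : ι → k)
    (p : ι → V) : ∑ i ∈ u, (s : Set ι).indicator w i • p i = ∑ i ∈ s, w i • p i :=
  Finset.sum_indicator_subset_of_eq_zero w (fun i a => a • p i) h fun _ => zero_smul k _

theorem AffineIndependent.eq_of_sum_eq_sum_finset {u : Finset ι} {p : ι → V}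
    (hp : AffineIndependent k fun i : u => p i) {w₁ w₂ : ι → k}
    (hw : ∑ i ∈ u, w₁ i = ∑ i ∈ u, w₂ i)
    (hwp : ∑ i ∈ u, w₁ i • p i = ∑ i ∈ u, w₂ i • p i) :
    ∀ i ∈ u, w₁ i = w₂ i := by
  rw [← Finset.sum_coe_sort u w₁, ← Finset.sum_coe_sort u w₂] at hw
  rw [← Finset.sum_coe_sort u (fun i => w₁ i • p i),
    ← Finset.sum_coe_sort u (fun i => w₂ i • p i)] at hwp
  exact fun i hi => hp.eq_of_sum_eq_sum (w₁ := fun i : u => w₁ i) (w₂ := fun i : u => w₂ i) hw hwp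
    ⟨i, hi⟩ (Finset.mem_univ _)

theorem affineIndependent_finset_of_forall_card_le {P : Type*} [AddTorsor V P] {S : Set ι}
    {p : ι → P} {m : ℕ} (hS : ∀ t : Finset S, t.card ≤ m → AffineIndependent k fun i : t => p i)
    {u : Finset ι} (hu : ↑u ⊆ S) (hcard : u.card ≤ m) :
    AffineIndependent k fun i : u => p i := by
  classical
  let t : Finset S := u.subtype (· ∈ S)
  have ht : t.card ≤ m :=
    ((Finset.card_subtype _ _).trans_le (Finset.card_filter_le _ _)).trans hcard
  let e : u ↪ t := ⟨fun i => ⟨⟨i, hu i.2⟩, Finset.mem_subtype.2 i.2⟩,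
    fun i j hij => Subtype.ext (congrArg (fun z : t => (z : S).1) hij)⟩
  exact (hS t ht).comp_embedding e

end Ring

section OrderedField

variable {𝕜 E F : Type*} [Field 𝕜] [LinearOrder 𝕜] [IsStrictOrderedRing 𝕜]
  [AddCommGroup E] [Module 𝕜 E] [AddCommGroup F] [Module 𝕜 F]

theorem map_sum_smul_of_eqOn_convexHull {s : Finset E} {f : E → F} {A : E →ᵃ[𝕜] F}
    (hA : EqOn f A (convexHull 𝕜 ↑s)) {w : E → 𝕜} (hw₀ : ∀ y ∈ s, 0 ≤ w y)
    (hw₁ : ∑ y ∈ s, w y = 1) :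
    f (∑ y ∈ s, w y • y) = ∑ y ∈ s, w y • f y := by
  have hmem : ∑ y ∈ s, w y • y ∈ convexHull 𝕜 (s : Set E) :=
    Finset.mem_convexHull'.2 ⟨w, hw₀, hw₁, rfl⟩
  rw [hA hmem, Finset.sum_congr rfl fun y hy =>
    congrArg (w y • ·) (hA (subset_convexHull 𝕜 _ hy))]
  simpa [s.affineCombination_eq_linear_combination _ _ hw₁] using
    s.map_affineCombination id w hw₁ A

theorem eq_of_map_eq_of_mem_convexHull [DecidableEq E] {s t : Finset E} {f : E → F}
    {A B : E →ᵃ[𝕜] F} (hA : EqOn f A (convexHull 𝕜 ↑s)) (hB : EqOn f B (convexHull 𝕜 ↑t))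
    (hst : AffineIndependent 𝕜 fun v : ↥(s ∪ t) => f v) {x y : E}
    (hx : x ∈ convexHull 𝕜 (s : Set E)) (hy : y ∈ convexHull 𝕜 (t : Set E)) (hxy : f x = f y) :
    x = y := by
  obtain ⟨w₁, hw₁₀, hw₁, rfl⟩ := Finset.mem_convexHull'.1 hx
  obtain ⟨w₂, hw₂₀, hw₂, rfl⟩ := Finset.mem_convexHull'.1 hy
  rw [map_sum_smul_of_eqOn_convexHull hA hw₁₀ hw₁,
    map_sum_smul_of_eqOn_convexHull hB hw₂₀ hw₂] at hxy
  have hweights := hst.eq_of_sum_eq_sum_finset (w₁ := (s : Set E).indicator w₁)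
    (w₂ := (t : Set E).indicator w₂)
    (by rw [Finset.sum_indicator_subset _ Finset.subset_union_left,
      Finset.sum_indicator_subset _ Finset.subset_union_right, hw₁, hw₂])
    (by rwa [Finset.sum_indicator_smul_of_subset Finset.subset_union_left,
      Finset.sum_indicator_smul_of_subset Finset.subset_union_right])
  calc ∑ v ∈ s, w₁ v • v = ∑ v ∈ s ∪ t, (s : Set E).indicator w₁ v • v :=
        (Finset.sum_indicator_smul_of_subset Finset.subset_union_left w₁ id).symm
    _ = ∑ v ∈ s ∪ t, (t : Set E).indicator w₂ v • v :=
        Finset.sum_congr rfl fun v hv => by rw [hweights v hv]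
    _ = ∑ v ∈ t, w₂ v • v := Finset.sum_indicator_smul_of_subset Finset.subset_union_right w₂ id

end OrderedField

theorem Geometry.SimplicialComplex.coe_subset_vertices {𝕜 E : Type*} [Field 𝕜] [LinearOrder 𝕜]
    [IsStrictOrderedRing 𝕜] [AddCommGroup E] [Module 𝕜 E] {K : SimplicialComplex 𝕜 E}
    {s : Finset E} (hs : s ∈ K.faces) : ↑s ⊆ K.vertices :=
  K.vertices_eq ▸ subset_biUnion_of_mem (u := fun s : Finset E => (s : Set E)) hs

theorem simplicial_map_injective_of_general_position_general
    {d N n : ℕ}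
    (K : Geometry.SimplicialComplex ℝ (EuclideanSpace ℝ (Fin d)))
    (hdim : ∀ s ∈ K.faces, s.card ≤ n + 1)
    (f : EuclideanSpace ℝ (Fin d) → EuclideanSpace ℝ (Fin N))
    (hsimp : ∀ s ∈ K.faces,
      ∃ A : EuclideanSpace ℝ (Fin d) →ᵃ[ℝ] EuclideanSpace ℝ (Fin N),
        ∀ x ∈ convexHull ℝ (s : Set (EuclideanSpace ℝ (Fin d))), f x = A x)
    (hgp : ∀ t : Finset K.vertices, t.card ≤ 2 * n + 2 →
      AffineIndependent ℝ (fun v : t => f (v : EuclideanSpace ℝ (Fin d)))) :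
    Set.InjOn f K.space := by
  classical
  intro x hx y hy hxy
  obtain ⟨s, hs, hxs⟩ := K.mem_space_iff.1 hx
  obtain ⟨t, ht, hyt⟩ := K.mem_space_iff.1 hy
  obtain ⟨A, hA⟩ := hsimp s hs
  obtain ⟨B, hB⟩ := hsimp t ht
  have hcard : (s ∪ t).card ≤ 2 * n + 2 := by
    linarith [Finset.card_union_le s t, hdim s hs, hdim t ht]
  have hvert : ↑(s ∪ t) ⊆ K.vertices := by
    rw [Finset.coe_union]
    exact union_subset (K.coe_subset_vertices hs) (K.coe_subset_vertices ht)
  exact eq_of_map_eq_of_mem_convexHull hA hB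
    (affineIndependent_finset_of_forall_card_le hgp hvert hcard) hxs hyt hxy

/-- Lemma 2.2: a simplicial (affine on each simplex) map on a locally finite simplicial
complex of dimension `n` whose vertex images are in `(2n+1)`-general position (every
subfamily of at most `2n+2` vertex images is affinely independent, i.e. no `l+1` of them lie
on an `(l-1)`-dimensional affine subspace for `1 ≤ l ≤ 2n+1`) is injective. -/
theorem simplicial_map_injective_of_general_position
    {d N n : ℕ}
    (K : Geometry.SimplicialComplex ℝ (EuclideanSpace ℝ (Fin d)))
    (hdim : ∀ s ∈ K.faces, s.card ≤ n + 1)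
    (hlocfin : ∀ v ∈ K.vertices, {s ∈ K.faces | v ∈ s}.Finite)
    (f : EuclideanSpace ℝ (Fin d) → EuclideanSpace ℝ (Fin N))
    (hsimp : ∀ s ∈ K.faces,
      ∃ A : EuclideanSpace ℝ (Fin d) →ᵃ[ℝ] EuclideanSpace ℝ (Fin N),
        ∀ x ∈ convexHull ℝ (s : Set (EuclideanSpace ℝ (Fin d))), f x = A x)
    (hgp : ∀ t : Finset K.vertices, t.card ≤ 2 * n + 2 →
      AffineIndependent ℝ (fun v : t => f (v : EuclideanSpace ℝ (Fin d)))) :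
    Set.InjOn f K.space :=
  simplicial_map_injective_of_general_position_general K hdim f hsimp hgp
end

section
/- Let T be a locally finite simplicial complex of dimension n with vertex set V, and let f be a simplicial (affine on each simplex) map from |T| to E^N. If f(V) is in (2n)-general position, then for every point p of |T|, the restriction of f to the closed star St(p) of p in T is injective. -/
/-!
Two closed simplices `s`, `t` of the star of `p` both contain `p`, hence share a vertex, so
`s ∪ t` has at most `2n + 1` vertices and their images under `f` are affinely independent.
Extending barycentric coordinates by zero, every point `x` of `s` or `t` is a combination of the
vertices of `s ∪ t`, and `f x` is the same combination of their images. So `f x = f y` forces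
equal coordinates, hence `x = y`.
-/

open Geometry Set

/-- The closed star of a point `p` in a simplicial complex: the union of all closed simplices
containing `p`. -/
def closedStar {d : ℕ} (K : Geometry.SimplicialComplex ℝ (EuclideanSpace ℝ (Fin d)))
    (p : EuclideanSpace ℝ (Fin d)) : Set (EuclideanSpace ℝ (Fin d)) :=
  ⋃ s ∈ {s | s ∈ K.faces ∧ p ∈ convexHull ℝ (s : Set (EuclideanSpace ℝ (Fin d)))},
    convexHull ℝ (s : Set (EuclideanSpace ℝ (Fin d)))

open Finset in
theorem exists_weights_of_eqOn_convexHull {E F : Type*} [AddCommGroup E] [Module ℝ E]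
    [AddCommGroup F] [Module ℝ F] {f : E → F} {A : E →ᵃ[ℝ] F} {s u : Finset E} (hsu : s ⊆ u)
    (hA : EqOn f A (convexHull ℝ (s : Set E))) {x : E} (hx : x ∈ convexHull ℝ (s : Set E)) :
    ∃ w : E → ℝ, ∑ v ∈ u, w v = 1 ∧ ∑ v ∈ u, w v • v = x ∧ ∑ v ∈ u, w v • f v = f x := by
  obtain ⟨w, -, hw₁, hwx⟩ := mem_convexHull'.mp hx
  have hfx : ∑ v ∈ s, w v • f v = f x := by
    have hfs : ∀ v ∈ s, f v = A v := fun v hv => hA (subset_convexHull ℝ _ (mem_coe.mpr hv))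
    have hcomb : s.affineCombination ℝ id w = x := by
      rw [affineCombination_eq_linear_combination s id w hw₁]
      exact hwx
    rw [hA hx, ← hcomb, map_affineCombination s id w hw₁ A,
      affineCombination_eq_linear_combination _ _ _ hw₁]
    exact sum_congr rfl fun v hv => by rw [hfs v hv]; rfl
  refine ⟨(s : Set E).indicator w, ?_, ?_, ?_⟩
  · rwa [sum_indicator_subset w hsu]
  · rwa [sum_indicator_subset_of_eq_zero w (fun v a => a • v) hsu fun _ => zero_smul ℝ _]
  · rwa [sum_indicator_subset_of_eq_zero w (fun v a => a • f v) hsu fun _ => zero_smul ℝ _]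

open Finset in
theorem eq_of_mem_convexHull_of_affineIndependent {E F : Type*} [AddCommGroup E] [Module ℝ E]
    [AddCommGroup F] [Module ℝ F] {f : E → F} {s t u : Finset E}
    (hind : AffineIndependent ℝ (fun v : u => f v)) (hsu : s ⊆ u) (htu : t ⊆ u)
    (hs : ∃ A : E →ᵃ[ℝ] F, EqOn f A (convexHull ℝ (s : Set E)))
    (ht : ∃ B : E →ᵃ[ℝ] F, EqOn f B (convexHull ℝ (t : Set E))) {x y : E}
    (hx : x ∈ convexHull ℝ (s : Set E)) (hy : y ∈ convexHull ℝ (t : Set E)) (hxy : f x = f y) :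
    x = y := by
  obtain ⟨A, hA⟩ := hs
  obtain ⟨B, hB⟩ := ht
  obtain ⟨w₁, hw₁, hw₁x, hw₁f⟩ := exists_weights_of_eqOn_convexHull hsu hA hx
  obtain ⟨w₂, hw₂, hw₂y, hw₂f⟩ := exists_weights_of_eqOn_convexHull htu hB hy
  have hw : ∀ v ∈ u, w₁ v = w₂ v := by
    have hwu := hind.eq_of_sum_eq_sum (s := univ) (w₁ := fun v : u => w₁ v)
      (w₂ := fun v : u => w₂ v)
      (by rw [sum_coe_sort u w₁, sum_coe_sort u w₂, hw₁, hw₂])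
      (by rw [sum_coe_sort u (fun v => w₁ v • f v), sum_coe_sort u (fun v => w₂ v • f v), hw₁f,
        hw₂f, hxy])
    exact fun v hv => hwu ⟨v, hv⟩ (mem_univ _)
  rw [← hw₁x, ← hw₂y]
  exact sum_congr rfl fun v hv => by rw [hw v hv]

theorem AffineIndependent.of_forall_finset_subtype {E F : Type*} [AddCommGroup F] [Module ℝ F]
    {S : Set E} {g : E → F} {m : ℕ}
    (h : ∀ t : Finset S, t.card ≤ m → AffineIndependent ℝ (fun v : t => g v))
    {u : Finset E} (hu : (u : Set E) ⊆ S) (hcard : u.card ≤ m) :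
    AffineIndependent ℝ (fun v : u => g v) := by
  classical
  let e : u ↪ u.subtype (· ∈ S) :=
    ⟨fun v => ⟨⟨v, hu v.2⟩, Finset.mem_subtype.mpr v.2⟩,
      fun v w hvw => Subtype.ext (congrArg (fun z => z.1.1) hvw)⟩
  have hcard' : (u.subtype (· ∈ S)).card ≤ m := by
    rw [Finset.card_subtype]
    exact (Finset.card_filter_le _ _).trans hcard
  exact (h _ hcard').comp_embedding e

namespace Geometry.SimplicialComplex

variable {E : Type*} [AddCommGroup E] [Module ℝ E] (K : SimplicialComplex ℝ E)

theorem coe_subset_vertices_s1 {s : Finset E} (hs : s ∈ K.faces) : (s : Set E) ⊆ K.vertices :=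
  K.vertices_eq ▸ subset_biUnion_of_mem (u := fun k : Finset E => (k : Set E)) hs

theorem inter_nonempty_of_mem_convexHull [DecidableEq E] {s t : Finset E} (hs : s ∈ K.faces)
    (ht : t ∈ K.faces) {p : E} (hps : p ∈ convexHull ℝ (s : Set E))
    (hpt : p ∈ convexHull ℝ (t : Set E)) : (s ∩ t).Nonempty := by
  have hp := K.inter_subset_convexHull hs ht ⟨hps, hpt⟩
  rw [← Finset.coe_inter] at hp
  exact Finset.coe_nonempty.mp (convexHull_nonempty_iff.mp ⟨p, hp⟩)

theorem card_union_le_of_mem_convexHull [DecidableEq E] {n : ℕ}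
    (hdim : ∀ s ∈ K.faces, s.card ≤ n + 1) {s t : Finset E} (hs : s ∈ K.faces)
    (ht : t ∈ K.faces) {p : E} (hps : p ∈ convexHull ℝ (s : Set E))
    (hpt : p ∈ convexHull ℝ (t : Set E)) : (s ∪ t).card ≤ 2 * n + 1 := by
  have hinter := (K.inter_nonempty_of_mem_convexHull hs ht hps hpt).card_pos
  have := Finset.card_union_add_card_inter s t
  have := hdim s hs
  have := hdim t ht
  omega

end Geometry.SimplicialComplex

theorem simplicial_map_injOn_closedStar_of_general_position_general
    {d N n : ℕ}
    (K : Geometry.SimplicialComplex ℝ (EuclideanSpace ℝ (Fin d)))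
    (hdim : ∀ s ∈ K.faces, s.card ≤ n + 1)
    (f : EuclideanSpace ℝ (Fin d) → EuclideanSpace ℝ (Fin N))
    (hsimp : ∀ s ∈ K.faces,
      ∃ A : EuclideanSpace ℝ (Fin d) →ᵃ[ℝ] EuclideanSpace ℝ (Fin N),
        ∀ x ∈ convexHull ℝ (s : Set (EuclideanSpace ℝ (Fin d))), f x = A x)
    (hgp : ∀ t : Finset K.vertices, t.card ≤ 2 * n + 1 →
      AffineIndependent ℝ (fun v : t => f (v : EuclideanSpace ℝ (Fin d)))) :
    ∀ p ∈ K.space, Set.InjOn f (closedStar K p) := by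
  classical
  intro p _ x hx y hy hxy
  obtain ⟨s, ⟨hs, hps⟩, hxs⟩ := mem_iUnion₂.mp hx
  obtain ⟨t, ⟨ht, hpt⟩, hyt⟩ := mem_iUnion₂.mp hy
  have hvert : ((s ∪ t : Finset _) : Set _) ⊆ K.vertices := by
    rw [Finset.coe_union]
    exact union_subset (K.coe_subset_vertices_s1 hs) (K.coe_subset_vertices_s1 ht)
  have hind := AffineIndependent.of_forall_finset_subtype hgp hvert
    (K.card_union_le_of_mem_convexHull hdim hs ht hps hpt)
  exact eq_of_mem_convexHull_of_affineIndependent hind Finset.subset_union_left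
    Finset.subset_union_right (hsimp s hs) (hsimp t ht) hxs hyt hxy

/-- Corollary 2.3: if the vertex images of a simplicial map on an `n`-dimensional locally
finite simplicial complex are in `(2n)`-general position (every subfamily of at most `2n+1`
vertex images is affinely independent), then the map is injective on the closed star of every
point of the underlying space. -/
theorem simplicial_map_injOn_closedStar_of_general_position
    {d N n : ℕ}
    (K : Geometry.SimplicialComplex ℝ (EuclideanSpace ℝ (Fin d)))
    (hdim : ∀ s ∈ K.faces, s.card ≤ n + 1)
    (hlocfin : ∀ v ∈ K.vertices, {s ∈ K.faces | v ∈ s}.Finite)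
    (f : EuclideanSpace ℝ (Fin d) → EuclideanSpace ℝ (Fin N))
    (hsimp : ∀ s ∈ K.faces,
      ∃ A : EuclideanSpace ℝ (Fin d) →ᵃ[ℝ] EuclideanSpace ℝ (Fin N),
        ∀ x ∈ convexHull ℝ (s : Set (EuclideanSpace ℝ (Fin d))), f x = A x)
    (hgp : ∀ t : Finset K.vertices, t.card ≤ 2 * n + 1 →
      AffineIndependent ℝ (fun v : t => f (v : EuclideanSpace ℝ (Fin d)))) :
    ∀ p ∈ K.space, Set.InjOn f (closedStar K p) :=
  simplicial_map_injOn_closedStar_of_general_position_general K hdim f hsimp hgp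
end

section
/- Let X be a compact metric space, Y a metric space, and (h_i) a sequence of continuous maps X → Y, each of which is an intrinsic isometry (pull_{h_i}(x,x') = d_X(x,x') for all x,x'). Suppose h_i converges uniformly to h and that for each i, with δ_i = δ(h_i, 1/i) chosen as in Petrunin's lemma, one has sup_x d_Y(h(x), h_i(x)) < δ_i. Then pull_h(x,x') ≥ d_X(x,x') - 1/i for every i, and hence pull_h(x,x') ≥ d_X(x,x') for all x, x' ∈ X. -/
/-!
Each `h i` is an intrinsic isometry, hence `1`-Lipschitz (the image distance never exceeds the
pullback metric), and so is its pointwise limit `H`, the `1`-Lipschitz maps being closed under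
pointwise convergence. Petrunin's lemma therefore applies to `g = H` and gives
`d_X = pull_{h i} < pull_H + 1/(i+1)`; letting `i → ∞` yields `d_X ≤ pull_H`.
-/

open scoped BigOperators ENNReal

/-- `pullEps f ε x x'` : the infimum over all `ε`-chains `x = p 0, p 1, ..., p n = x'`
(consecutive distances at most `ε`) of the sum of distances of consecutive images under `f`. -/
noncomputable def pullEps {X Y : Type*} [PseudoMetricSpace X] [PseudoMetricSpace Y]
    (f : X → Y) (ε : ℝ) (x x' : X) : ℝ≥0∞ :=
  ⨅ (n : ℕ) (p : Fin (n + 1) → X)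
    (_ : p 0 = x ∧ p (Fin.last n) = x' ∧ ∀ i : Fin n, dist (p i.castSucc) (p i.succ) ≤ ε),
    ∑ i : Fin n, edist (f (p i.castSucc)) (f (p i.succ))

/-- The pullback metric `pull_f(x,x') = lim_{ε → 0} pull_{f,ε}(x,x')`; since `pull_{f,ε}` is
monotone nonincreasing in `ε`, the limit is the supremum over `ε > 0`. -/
noncomputable def pullMetric {X Y : Type*} [PseudoMetricSpace X] [PseudoMetricSpace Y]
    (f : X → Y) (x x' : X) : ℝ≥0∞ :=
  ⨆ (ε : ℝ) (_ : 0 < ε), pullEps f ε x x'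

lemma edist_le_sum_edist_fin {α : Type*} [PseudoEMetricSpace α] {n : ℕ} (q : Fin (n + 1) → α) :
    edist (q 0) (q (Fin.last n)) ≤ ∑ i : Fin n, edist (q i.castSucc) (q i.succ) := by
  induction n with
  | zero => simp
  | succ n ih =>
    rw [Fin.sum_univ_castSucc]
    calc edist (q 0) (q (Fin.last (n + 1)))
        ≤ edist (q 0) (q (Fin.last n).castSucc)
          + edist (q (Fin.last n).castSucc) (q (Fin.last n).succ) := edist_triangle _ _ _
      _ ≤ _ := by
        gcongr
        simpa only [Fin.succ_castSucc, Fin.castSucc_zero] using ih (fun i => q i.castSucc)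

lemma edist_le_pullEps {X Y : Type*} [PseudoMetricSpace X] [PseudoMetricSpace Y]
    (f : X → Y) (ε : ℝ) (x x' : X) : edist (f x) (f x') ≤ pullEps f ε x x' := by
  refine le_iInf fun n => le_iInf fun p => le_iInf ?_
  rintro ⟨rfl, rfl, -⟩
  exact edist_le_sum_edist_fin (f ∘ p)

lemma edist_le_pullMetric {X Y : Type*} [PseudoMetricSpace X] [PseudoMetricSpace Y]
    (f : X → Y) (x x' : X) : edist (f x) (f x') ≤ pullMetric f x x' :=
  (edist_le_pullEps f 1 x x').trans (le_iSup₂ (f := fun ε _ => pullEps f ε x x') 1 one_pos)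

lemma LipschitzWith.of_pullMetric_le {X Y : Type*} [PseudoMetricSpace X] [PseudoMetricSpace Y]
    {f : X → Y} (hf : ∀ x x', pullMetric f x x' ≤ edist x x') : LipschitzWith 1 f :=
  .of_edist_le fun x x' => (edist_le_pullMetric f x x').trans (hf x x')

lemma ENNReal.le_of_forall_tsub_one_div_succ_le {a b : ℝ≥0∞}
    (h : ∀ i : ℕ, a - ENNReal.ofReal (1 / (i + 1)) ≤ b) : a ≤ b := by
  refine ENNReal.le_of_forall_pos_le_add fun ε hε _ => ?_
  obtain ⟨i, hi⟩ := exists_nat_one_div_lt (NNReal.coe_pos.2 hε)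
  calc a ≤ b + ENNReal.ofReal (1 / (i + 1)) := tsub_le_iff_right.1 (h i)
    _ ≤ b + ε := by
      gcongr
      exact (ENNReal.ofReal_le_ofReal hi.le).trans_eq ENNReal.ofReal_coe_nnreal

theorem pullMetric_limit_ge_general {X Y : Type*} [MetricSpace X] [MetricSpace Y]
    (h : ℕ → X → Y)
    (hiso : ∀ i, ∀ x x' : X, pullMetric (h i) x x' = edist x x')
    (H : X → Y) (hunif : TendstoUniformly h H Filter.atTop)
    (δ : ℕ → ℝ)
    (hPetrunin : ∀ i : ℕ, ∀ g : X → Y, LipschitzWith 1 g →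
      (∀ x, dist (h i x) (g x) < δ i) →
      ∀ x x' : X, pullMetric (h i) x x' < pullMetric g x x' + ENNReal.ofReal (1 / (i + 1)))
    (hclose : ∀ i : ℕ, ∀ x : X, dist (H x) (h i x) < δ i) :
    (∀ i : ℕ, ∀ x x' : X,
        edist x x' - ENNReal.ofReal (1 / (i + 1)) ≤ pullMetric H x x') ∧
    ∀ x x' : X, edist x x' ≤ pullMetric H x x' := by
  have hlip : ∀ i, LipschitzWith 1 (h i) := fun i =>
    .of_pullMetric_le fun x x' => (hiso i x x').le
  have hHlip : LipschitzWith 1 H :=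
    (isClosed_setOfPred_lipschitzWith 1).mem_of_tendsto
      (tendsto_pi_nhds.2 hunif.tendsto_at) (.of_forall hlip)
  have approx : ∀ i : ℕ, ∀ x x' : X,
      edist x x' - ENNReal.ofReal (1 / (i + 1)) ≤ pullMetric H x x' := by
    intro i x x'
    have := hPetrunin i H hHlip (fun y => dist_comm (H y) (h i y) ▸ hclose i y) x x'
    rw [hiso i x x'] at this
    exact tsub_le_iff_right.2 this.le
  exact ⟨approx, fun x x' => ENNReal.le_of_forall_tsub_one_div_succ_le (approx · x x')⟩

/-- If intrinsic isometries `h i` on a compact space converge uniformly to `h`, with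
`d(h, h i) < δ i` where `δ i = δ(h i, 1/(i+1))` is as in Petrunin's lemma, then
`pull_h ≥ d_X - 1/(i+1)` for every `i`, and hence `pull_h ≥ d_X`. -/
theorem pullMetric_limit_ge {X Y : Type*} [MetricSpace X] [CompactSpace X] [MetricSpace Y]
    (h : ℕ → X → Y) (hcont : ∀ i, Continuous (h i))
    (hiso : ∀ i, ∀ x x' : X, pullMetric (h i) x x' = edist x x')
    (H : X → Y) (hunif : TendstoUniformly h H Filter.atTop)
    (δ : ℕ → ℝ) (hδpos : ∀ i, 0 < δ i)
    (hPetrunin : ∀ i : ℕ, ∀ g : X → Y, LipschitzWith 1 g →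
      (∀ x, dist (h i x) (g x) < δ i) →
      ∀ x x' : X, pullMetric (h i) x x' < pullMetric g x x' + ENNReal.ofReal (1 / (i + 1)))
    (hclose : ∀ i : ℕ, ∀ x : X, dist (H x) (h i x) < δ i) :
    (∀ i : ℕ, ∀ x x' : X,
        edist x x' - ENNReal.ofReal (1 / (i + 1)) ≤ pullMetric H x x') ∧
    ∀ x x' : X, edist x x' ≤ pullMetric H x x' :=
  pullMetric_limit_ge_general h hiso H hunif δ hPetrunin hclose
end
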